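/- arXiv:1307.0174 — 4 statements merged into one kernel-verified Lean document; each statement's English description precedes it below -/
import Mathlib

section
/- If f : D → D is holomorphic with f(0) = 0 and |f'(0)| = a > 0, then f is injective on the disk of radius a/(1 + √(1 - a²)) centered at 0. -/
/-!
Rotate `f` so that `f'(0) = a > 0` and write `f z = z * h z` with `h = dslope f 0`. If `a = 1`,
the equality case of Schwarz's lemma makes `f` a rotation. Otherwise `h` maps the disc into itself
with `h 0 = a`. Schwarz's lemma applied to the Möbius image `(h - a) / (1 - a h)` gives
`Re h z ≥ (a - t) / (1 - a t)` for `‖z‖ = t`, and the Schwarz–Pick lemma gives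
`t ‖h' z‖ ≤ t (1 - ‖h z‖²) / (1 - t²)`. Together they force `Re f' z = Re (h z + z h' z) > 0`
whenever `a t² - 2 t + a > 0`, that is for `t < a / (1 + √(1 - a²))`, and a map whose derivative
has positive real part on a convex set is injective there (Noshiro–Warschawski).
-/

open Metric Set
open scoped ComplexConjugate

noncomputable def mobius (u z : ℂ) : ℂ := (z - u) / (1 - conj u * z)

section Mobius

variable {u z : ℂ}

lemma mobius_self (u : ℂ) : mobius u u = 0 := by simp [mobius]

lemma mobius_neg_zero (u : ℂ) : mobius (-u) 0 = u := by simp [mobius]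

lemma one_sub_conj_mul_ne_zero (hu : ‖u‖ < 1) (hz : ‖z‖ < 1) : 1 - conj u * z ≠ 0 := by
  refine sub_ne_zero.2 fun h => ?_
  have : ‖conj u * z‖ < 1 := by
    rw [norm_mul, Complex.norm_conj]
    nlinarith [norm_nonneg u, norm_nonneg z]
  simp [← h] at this

lemma normSq_one_sub_conj_mul_sub_normSq_sub (u z : ℂ) :
    Complex.normSq (1 - conj u * z) - Complex.normSq (z - u) =
      (1 - Complex.normSq u) * (1 - Complex.normSq z) := by
  simp only [Complex.normSq_apply, Complex.sub_re, Complex.sub_im, Complex.mul_re,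
    Complex.mul_im, Complex.one_re, Complex.one_im, Complex.conj_re, Complex.conj_im]
  ring

lemma norm_mobius_lt_one (hu : ‖u‖ < 1) (hz : ‖z‖ < 1) : ‖mobius u z‖ < 1 := by
  have hden := one_sub_conj_mul_ne_zero hu hz
  rw [mobius, norm_div, div_lt_one (norm_pos_iff.2 hden), ← sq_lt_sq₀ (norm_nonneg _)
    (norm_nonneg _), Complex.sq_norm, Complex.sq_norm, ← sub_pos,
    normSq_one_sub_conj_mul_sub_normSq_sub, ← Complex.sq_norm, ← Complex.sq_norm]
  have := sq_lt_one_iff₀ (norm_nonneg u) |>.2 hu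
  have := sq_lt_one_iff₀ (norm_nonneg z) |>.2 hz
  apply mul_pos <;> linarith

lemma mapsTo_mobius (hu : ‖u‖ < 1) : MapsTo (mobius u) (ball 0 1) (ball 0 1) := fun z hz => by
  rw [mem_ball_zero_iff] at hz ⊢
  exact norm_mobius_lt_one hu hz

lemma hasDerivAt_mobius (hz : 1 - conj u * z ≠ 0) :
    HasDerivAt (mobius u) ((1 - ‖u‖ ^ 2) / (1 - conj u * z) ^ 2) z := by
  refine (((hasDerivAt_id z).sub_const u).div
    (((hasDerivAt_id z).const_mul (conj u)).const_sub 1) hz).congr_deriv ?_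
  rw [← Complex.conj_mul']
  simp only [id]
  ring

lemma differentiableOn_mobius (hu : ‖u‖ < 1) : DifferentiableOn ℂ (mobius u) (ball 0 1) :=
  fun _ hw => (hasDerivAt_mobius (one_sub_conj_mul_ne_zero hu
    (mem_ball_zero_iff.1 hw))).differentiableAt.differentiableWithinAt

end Mobius

lemma Set.MapsTo.closedBall_apply_zero {f : ℂ → ℂ} {R : ℝ} (hm : MapsTo f (ball 0 R) (ball 0 R))
    (h0 : f 0 = 0) : MapsTo f (ball 0 R) (closedBall (f 0) R) := by
  rw [h0]
  exact hm.mono_right ball_subset_closedBall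

lemma norm_one_sub_sq_norm {w : ℂ} (hw : ‖w‖ ≤ 1) : ‖(1 - ‖w‖ ^ 2 : ℂ)‖ = 1 - ‖w‖ ^ 2 := by
  rw [← Complex.ofReal_one, ← Complex.ofReal_pow, ← Complex.ofReal_sub,
    Complex.norm_of_nonneg (by nlinarith [norm_nonneg w])]

theorem norm_deriv_mul_one_sub_sq_le {g : ℂ → ℂ} (hd : DifferentiableOn ℂ g (ball 0 1))
    (hm : MapsTo g (ball 0 1) (ball 0 1)) {z : ℂ} (hz : z ∈ ball 0 1) :
    ‖deriv g z‖ * (1 - ‖z‖ ^ 2) ≤ 1 - ‖g z‖ ^ 2 := by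
  have hz1 : ‖z‖ < 1 := mem_ball_zero_iff.1 hz
  have hgz1 : ‖g z‖ < 1 := mem_ball_zero_iff.1 (hm hz)
  have hσ : MapsTo (mobius (-z)) (ball 0 1) (ball 0 1) := mapsTo_mobius (by rwa [norm_neg])
  set H := mobius (g z) ∘ g ∘ mobius (-z)
  have hH : HasDerivAt H ((1 - ‖g z‖ ^ 2 : ℂ)⁻¹ * (deriv g z * (1 - ‖z‖ ^ 2))) 0 := by
    have hσ' : HasDerivAt (mobius (-z)) (1 - ‖z‖ ^ 2) 0 := by
      simpa using hasDerivAt_mobius (u := -z) (z := 0) (by simp)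
    have hg' : HasDerivAt g (deriv g z) (mobius (-z) 0) := by
      rw [mobius_neg_zero]
      exact (hd.differentiableAt (isOpen_ball.mem_nhds hz)).hasDerivAt
    have hψ' : HasDerivAt (mobius (g z)) (1 - ‖g z‖ ^ 2 : ℂ)⁻¹ (g (mobius (-z) 0)) := by
      have hne := one_sub_conj_mul_ne_zero hgz1 hgz1
      rw [mobius_neg_zero]
      convert hasDerivAt_mobius hne using 1
      rw [Complex.conj_mul', sq (1 - _), div_mul_cancel_left₀ (by rwa [← Complex.conj_mul'])]
    exact hψ'.comp 0 (hg'.comp 0 hσ')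
  have hH1 : ‖deriv H 0‖ ≤ 1 :=
    Complex.norm_deriv_le_one_of_mapsTo_ball
      (((differentiableOn_mobius hgz1).comp hd hm).comp
        (differentiableOn_mobius (by rwa [norm_neg])) hσ)
      (((mapsTo_mobius hgz1).comp hm).comp hσ |>.closedBall_apply_zero
        (by simp [mobius_neg_zero, mobius_self]))
      one_pos
  rwa [hH.deriv, norm_mul, norm_mul, norm_inv, norm_one_sub_sq_norm hz1.le,
    norm_one_sub_sq_norm hgz1.le, inv_mul_le_iff₀ (by nlinarith [norm_nonneg (g z)]), mul_one]
    at hH1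

lemma div_le_re_of_norm_mobius_le {a t : ℝ} {w : ℂ} (ha0 : 0 ≤ a) (ha1 : a ≤ 1) (ht1 : t < 1)
    (hw : ‖w‖ < 1) (h : ‖mobius a w‖ ≤ t) : (a - t) / (1 - a * t) ≤ w.re := by
  have ht0 : 0 ≤ t := (norm_nonneg _).trans h
  have hre : |w.re| < 1 := (Complex.abs_re_le_norm w).trans_lt hw
  have hden : 0 < 1 - a * w.re := by nlinarith [abs_lt.1 hre]
  have hden' : (1 - a * w : ℂ) ≠ 0 := fun h0 => by
    simpa [hden.ne'] using congrArg Complex.re h0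
  rw [mobius, Complex.conj_ofReal, norm_div, div_le_iff₀ (norm_pos_iff.2 hden')] at h
  have hsq := pow_le_pow_left₀ (norm_nonneg _) h 2
  rw [mul_pow, Complex.sq_norm, Complex.sq_norm, Complex.normSq_apply, Complex.normSq_apply]
    at hsq
  simp only [Complex.sub_re, Complex.sub_im, Complex.mul_re, Complex.mul_im, Complex.ofReal_re,
    Complex.ofReal_im, Complex.one_re, Complex.one_im] at hsq
  have hsq' : (w.re - a) ^ 2 ≤ (t * (1 - a * w.re)) ^ 2 := by
    have : (a * t) ^ 2 ≤ 1 := pow_le_one₀ (by positivity) (mul_le_one₀ ha1 ht0 ht1.le)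
    nlinarith [mul_nonneg (sq_nonneg w.im) (sub_nonneg.2 this)]
  have := (abs_le_of_sq_le_sq' hsq' (by positivity)).1
  rw [div_le_iff₀ (by nlinarith)]
  linarith

-- `a / (1 + √(1 - a²))` is the smaller root of `a t² - 2 t + a`.
lemma mul_sq_sub_two_mul_add_pos {a t : ℝ} (ha0 : 0 < a) (ha1 : a ≤ 1)
    (ht : t < a / (1 + √(1 - a ^ 2))) : 0 < a * t ^ 2 - 2 * t + a := by
  set s := √(1 - a ^ 2)
  have hs0 : 0 ≤ s := Real.sqrt_nonneg _
  have hs2 : s ^ 2 = 1 - a ^ 2 := Real.sq_sqrt (by nlinarith)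
  have hs1 : s < 1 := by nlinarith
  have hts : t * (1 + s) < a := (lt_div_iff₀ (by positivity)).1 ht
  have hta : a * t < 1 - s := by
    have : t * (1 + s) * (1 - s) < a * (1 - s) := mul_lt_mul_of_pos_right hts (by linarith)
    nlinarith
  have : a * (a * t ^ 2 - 2 * t + a) = (1 - a * t - s) * (1 - a * t + s) := by
    linear_combination hs2
  nlinarith [mul_pos (sub_pos.2 hta) (by linarith : 0 < 1 - a * t + s)]

lemma mul_lt_of_div_le_of_mul_one_sub_sq_le {a t s A : ℝ} (ht0 : 0 ≤ t) (ht1 : t < 1)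
    (ha1 : a ≤ 1) (hq : 0 < a * t ^ 2 - 2 * t + a) (hs : (a - t) / (1 - a * t) ≤ s)
    (hA : A * (1 - t ^ 2) ≤ 1 - s ^ 2) : t * A < s := by
  have hat : 0 < 1 - a * t := by nlinarith
  have hta : t < a := by nlinarith
  have hs' : a - t ≤ s * (1 - a * t) := (div_le_iff₀ hat).1 hs
  have hs0 : 0 < s := (div_pos (by linarith) hat).trans_le hs
  -- `s (1 - t²) - t (1 - s²)` increases in `s` and equals `(1 - t²)(a t² - 2 t + a) / (1 - a t)²`
  -- at `s = (a - t) / (1 - a t)`.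
  have hψ : 0 < s * (1 - t ^ 2) - t * (1 - s ^ 2) := by
    have key : (s * (1 - t ^ 2) - t * (1 - s ^ 2)) * (1 - a * t) ^ 2 =
        (s * (1 - a * t) - (a - t)) * ((1 - t ^ 2 + t * s) * (1 - a * t) + t * (a - t)) +
          (1 - t ^ 2) * (a * t ^ 2 - 2 * t + a) := by ring
    have : 0 ≤ (s * (1 - a * t) - (a - t)) * ((1 - t ^ 2 + t * s) * (1 - a * t) + t * (a - t)) :=
      mul_nonneg (by linarith) (add_nonneg (mul_nonneg (by nlinarith) hat.le)
        (mul_nonneg ht0 (by linarith)))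
    refine (mul_pos_iff_of_pos_right (pow_pos hat 2)).1 ?_
    rw [key]
    nlinarith [mul_pos (by nlinarith : (0 : ℝ) < 1 - t ^ 2) hq]
  have : t * A * (1 - t ^ 2) < s * (1 - t ^ 2) := by
    nlinarith [mul_le_mul_of_nonneg_left hA ht0]
  exact lt_of_mul_lt_mul_right this (by nlinarith)

theorem Convex.injOn_of_re_deriv_pos {f f' : ℂ → ℂ} {s : Set ℂ} (hs : Convex ℝ s)
    (hf : ∀ z ∈ s, HasDerivAt f (f' z) z) (hre : ∀ z ∈ s, 0 < (f' z).re) : InjOn f s := by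
  intro z₁ hz₁ z₂ hz₂ heq
  by_contra hne
  have hd : z₂ - z₁ ≠ 0 := sub_ne_zero.2 (Ne.symm hne)
  have hseg : ∀ t ∈ Icc (0 : ℝ) 1, z₁ + t * (z₂ - z₁) ∈ s := fun t ht => by
    simpa [Complex.real_smul] using hs.add_smul_sub_mem hz₁ hz₂ ht
  have hu : ∀ t ∈ Icc (0 : ℝ) 1, HasDerivAt (fun x : ℝ => (f (z₁ + x * (z₂ - z₁)) / (z₂ - z₁)).re)
      (f' (z₁ + t * (z₂ - z₁))).re t := by
    intro t ht
    have := ((hf _ (hseg t ht)).comp (t : ℂ)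
      (((hasDerivAt_id (t : ℂ)).mul_const (z₂ - z₁)).const_add z₁)).div_const (z₂ - z₁)
    simp only [id_eq, one_mul] at this
    rw [mul_div_cancel_right₀ _ hd] at this
    exact this.real_of_complex
  obtain ⟨ξ, hξ, hslope⟩ := exists_hasDerivAt_eq_slope _ _ zero_lt_one
    (fun t ht => (hu t ht).continuousAt.continuousWithinAt)
    (fun t ht => hu t (Ioo_subset_Icc_self ht))
  have := hre _ (hseg ξ (Ioo_subset_Icc_self hξ))
  simp [heq] at hslope
  linarith

theorem re_add_mul_deriv_pos {h : ℂ → ℂ} {a : ℝ} (hd : DifferentiableOn ℂ h (ball 0 1))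
    (hm : MapsTo h (ball 0 1) (ball 0 1)) (h0 : h 0 = a) {z : ℂ}
    (hz : ‖z‖ < a / (1 + √(1 - a ^ 2))) : 0 < (h z + z * deriv h z).re := by
  have ha0 : 0 < a :=
    (div_pos_iff_of_pos_right (by positivity)).1 ((norm_nonneg z).trans_lt hz)
  have ha1 : a < 1 := by simpa [h0, abs_of_pos ha0] using hm (mem_ball_self one_pos)
  have hz1 : ‖z‖ < 1 := hz.trans_le <|
    (div_le_self ha0.le (le_add_of_nonneg_right (Real.sqrt_nonneg _))).trans ha1.le
  have hhz : ‖h z‖ < 1 := mem_ball_zero_iff.1 (hm (mem_ball_zero_iff.2 hz1))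
  have hφ : ‖mobius a (h z)‖ ≤ ‖z‖ := by
    have ha : ‖(a : ℂ)‖ < 1 := by simpa [abs_of_pos ha0]
    refine Complex.norm_le_norm_of_mapsTo_ball ((differentiableOn_mobius ha).comp hd hm)
      (((mapsTo_mobius ha).comp hm).mono_right ball_subset_closedBall) ?_ hz1
    simp [h0, mobius_self]
  have hre := div_le_re_of_norm_mobius_le ha0.le ha1.le hz1 hhz hφ
  have hpick := norm_deriv_mul_one_sub_sq_le hd hm (mem_ball_zero_iff.2 hz1)
  have hre_sq : (h z).re ^ 2 ≤ ‖h z‖ ^ 2 :=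
    sq_le_sq' (abs_le.1 (Complex.abs_re_le_norm _)).1 (Complex.re_le_norm _)
  have hmul : -(‖z‖ * ‖deriv h z‖) ≤ (z * deriv h z).re := by
    rw [← norm_mul]
    exact neg_le_of_abs_le (Complex.abs_re_le_norm _)
  have := mul_lt_of_div_le_of_mul_one_sub_sq_le (A := ‖deriv h z‖) (norm_nonneg z) hz1 ha1.le
    (mul_sq_sub_two_mul_add_pos ha0 ha1.le hz) hre (by linarith)
  rw [Complex.add_re]
  linarith

lemma mapsTo_dslope_of_norm_deriv_lt_one {f : ℂ → ℂ} (hd : DifferentiableOn ℂ f (ball 0 1))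
    (hm : MapsTo f (ball 0 1) (ball 0 1)) (h0 : f 0 = 0) (hf' : ‖deriv f 0‖ < 1) :
    MapsTo (dslope f 0) (ball 0 1) (ball 0 1) := by
  have hm' := hm.closedBall_apply_zero h0
  have hle : ∀ w ∈ ball (0 : ℂ) 1, ‖dslope f 0 w‖ ≤ 1 := fun w hw => by
    simpa using Complex.norm_dslope_le_div_of_mapsTo_ball hd hm' hw
  intro z hz
  refine mem_ball_zero_iff.2 ((hle z hz).lt_of_ne fun hz1 => hf'.ne ?_)
  have hdiff : DifferentiableOn ℂ (dslope f 0) (ball 0 1) :=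
    (Complex.differentiableOn_dslope (isOpen_ball.mem_nhds (mem_ball_self one_pos))).2 hd
  have := Complex.norm_eqOn_of_isPreconnected_of_isMaxOn (convex_ball (0 : ℂ) 1).isPreconnected
    isOpen_ball hdiff hz (fun w hw => by simpa [hz1] using hle w hw) (mem_ball_self one_pos)
  simpa [hz1] using this

lemma injOn_of_norm_deriv_eq_one {f : ℂ → ℂ} (hd : DifferentiableOn ℂ f (ball 0 1))
    (hm : MapsTo f (ball 0 1) (ball 0 1)) (h0 : f 0 = 0) (hf' : ‖deriv f 0‖ = 1) :
    InjOn f (ball 0 1) := by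
  have hm' := hm.closedBall_apply_zero h0
  have hlin : EqOn f (fun z => z * deriv f 0) (ball 0 1) := by
    simpa [h0] using Complex.affine_of_mapsTo_ball_of_norm_dslope_eq_div hd hm'
      (mem_ball_self one_pos) (by simpa using hf')
  have hne : deriv f 0 ≠ 0 := norm_ne_zero_iff.1 (by simp [hf'])
  intro z hz w hw hzw
  simpa [hlin hz, hlin hw, hne] using hzw

theorem injOn_ball_of_deriv_eq_ofReal {g : ℂ → ℂ} {a : ℝ} (hd : DifferentiableOn ℂ g (ball 0 1))
    (hm : MapsTo g (ball 0 1) (ball 0 1)) (h0 : g 0 = 0) (ha : deriv g 0 = a) (ha1 : |a| < 1) :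
    InjOn g (ball 0 (a / (1 + √(1 - a ^ 2)))) := by
  have hdiff : DifferentiableOn ℂ (dslope g 0) (ball 0 1) :=
    (Complex.differentiableOn_dslope (isOpen_ball.mem_nhds (mem_ball_self one_pos))).2 hd
  have hmaps := mapsTo_dslope_of_norm_deriv_lt_one hd hm h0 (by simpa [ha] using ha1)
  have hr : a / (1 + √(1 - a ^ 2)) ≤ 1 :=
    div_le_one_of_le₀ (by linarith [(abs_lt.1 ha1).2, Real.sqrt_nonneg (1 - a ^ 2)])
      (by positivity)
  have hg : ∀ w, g w = w * dslope g 0 w := fun w => by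
    simpa [h0] using (sub_smul_dslope g 0 w).symm
  refine (convex_ball 0 _).injOn_of_re_deriv_pos (fun z hz => ?_)
    (fun z hz => re_add_mul_deriv_pos hdiff hmaps (by simp [ha]) (mem_ball_zero_iff.1 hz))
  have hmul := (hasDerivAt_id' z).mul
    (hdiff.differentiableAt (isOpen_ball.mem_nhds (ball_subset_ball hr hz))).hasDerivAt
  rw [one_mul] at hmul
  exact hmul.congr_of_eventuallyEq (Filter.Eventually.of_forall hg)

theorem univalent_on_small_disk
    (f : ℂ → ℂ) (hd : DifferentiableOn ℂ f (ball (0:ℂ) 1))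
    (hm : MapsTo f (ball (0:ℂ) 1) (ball (0:ℂ) 1))
    (h0 : f 0 = 0) (a : ℝ) (ha : a = ‖deriv f 0‖) (hpos : 0 < a) :
    InjOn f (ball (0:ℂ) (a / (1 + Real.sqrt (1 - a^2)))) := by
  have ha1 : a ≤ 1 :=
    ha ▸ Complex.norm_deriv_le_one_of_mapsTo_ball hd (hm.closedBall_apply_zero h0) one_pos
  obtain rfl | ha1 := ha1.eq_or_lt
  · exact (injOn_of_norm_deriv_eq_one hd hm h0 ha.symm).mono (ball_subset_ball (by norm_num))
  set u : ℂ := conj (deriv f 0) / a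
  have hu : ‖u‖ = 1 := by simp [u, ← ha, abs_of_pos hpos, hpos.ne']
  have hf0 : DifferentiableAt ℂ f 0 :=
    hd.differentiableAt (isOpen_ball.mem_nhds (mem_ball_self one_pos))
  have hderiv : deriv (fun z => u * f z) 0 = a := by
    rw [deriv_const_mul u hf0, div_mul_eq_mul_div, Complex.conj_mul', ← ha]
    field_simp
  refine InjOn.of_comp (g := (u * ·)) <| injOn_ball_of_deriv_eq_ofReal (hd.const_mul u)
    (fun z hz => by simpa [hu] using hm hz) (by simp [h0]) hderiv (abs_lt.2 ⟨by linarith, ha1⟩)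
end

section
/- Let λ ∈ D with λ ≠ 0, let φ_λ(z) = (λ - z)/(1 - conj(λ)·z), and let K be a compact subset of D with r(K) = max{|z| : z ∈ K} < 1. Then for all z ∈ K, |φ_λ(z) - λ/|λ|| ≤ 2(1 - |λ|)/(1 - r(K)). -/
open Metric ComplexConjugate

namespace Complex

theorem mobius_sub_div_norm_eq {lam z : ℂ} (hlam : lam ≠ 0) (hden : 1 - conj lam * z ≠ 0) :
    (lam - z) / (1 - conj lam * z) - lam / (‖lam‖ : ℂ)
      = (‖lam‖ - 1) * (lam + ‖lam‖ * z) / (‖lam‖ * (1 - conj lam * z)) := by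
  have ha : (‖lam‖ : ℂ) ≠ 0 := by exact_mod_cast norm_ne_zero_iff.mpr hlam
  have hconj : conj lam * lam = ‖lam‖ * ‖lam‖ := by
    rw [mul_comm, mul_conj, normSq_eq_norm_sq]; push_cast; ring
  rw [div_sub_div _ _ hden ha, div_eq_div_iff (mul_ne_zero hden ha) (mul_ne_zero ha hden)]
  linear_combination (‖lam‖ * (1 - conj lam * z) * z) * hconj

theorem one_sub_norm_mul_norm_le_norm_one_sub_conj_mul (lam z : ℂ) :
    1 - ‖lam‖ * ‖z‖ ≤ ‖1 - conj lam * z‖ := by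
  simpa only [norm_one, norm_mul, norm_conj] using norm_sub_norm_le (1 : ℂ) (conj lam * z)

theorem norm_mobius_sub_div_norm_le {lam z : ℂ} {r : ℝ} (hlam : ‖lam‖ ≤ 1) (hne : lam ≠ 0)
    (hz : ‖z‖ ≤ r) (hr : r < 1) :
    ‖(lam - z) / (1 - conj lam * z) - lam / (‖lam‖ : ℂ)‖ ≤ 2 * (1 - ‖lam‖) / (1 - r) := by
  set a := ‖lam‖
  have ha0 : 0 < a := norm_pos_iff.mpr hne
  have hden : 1 - r ≤ ‖1 - conj lam * z‖ := by
    have : a * ‖z‖ ≤ r := by nlinarith [norm_nonneg z]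
    linarith [one_sub_norm_mul_norm_le_norm_one_sub_conj_mul lam z]
  have hden0 : 1 - conj lam * z ≠ 0 := norm_pos_iff.mp (by linarith)
  have hnum : ‖lam + a * z‖ ≤ 2 * a := by
    calc ‖lam + a * z‖ ≤ a + a * ‖z‖ := by
          simpa only [norm_mul, norm_real, Real.norm_of_nonneg ha0.le] using norm_add_le lam (a * z)
      _ ≤ 2 * a := by nlinarith
  have hfactor : ‖(a : ℂ) - 1‖ = 1 - a := by
    rw [← ofReal_one, ← ofReal_sub, norm_real, Real.norm_of_nonpos (by linarith), neg_sub]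
  rw [mobius_sub_div_norm_eq hne hden0, norm_div, norm_mul, norm_mul, hfactor, norm_real,
    Real.norm_of_nonneg ha0.le]
  calc (1 - a) * ‖lam + a * z‖ / (a * ‖1 - conj lam * z‖)
      ≤ (1 - a) * (2 * a) / (a * (1 - r)) := by
        gcongr
    _ = 2 * (1 - a) / (1 - r) := by
        field_simp

end Complex

theorem mobius_close_to_unimodular_constant_general
    (lam : ℂ) (hlam : lam ∈ ball (0:ℂ) 1) (hne : lam ≠ 0)
    (K : Set ℂ) (hKD : K ⊆ ball (0:ℂ) 1)
    (r : ℝ) (hr : IsGreatest ((fun w : ℂ => ‖w‖) '' K) r) :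
    ∀ z ∈ K,
      ‖(lam - z) / (1 - (starRingEnd ℂ) lam * z) - lam / (‖lam‖ : ℂ)‖
        ≤ 2 * (1 - ‖lam‖) / (1 - r) := by
  intro z hz
  obtain ⟨z₀, hz₀, rfl⟩ := hr.1
  exact Complex.norm_mobius_sub_div_norm_le (mem_ball_zero_iff.mp hlam).le hne
    (hr.2 ⟨z, hz, rfl⟩) (mem_ball_zero_iff.mp (hKD hz₀))

theorem mobius_close_to_unimodular_constant
    (lam : ℂ) (hlam : lam ∈ ball (0:ℂ) 1) (hne : lam ≠ 0)
    (K : Set ℂ) (hK : IsCompact K) (hKne : K.Nonempty) (hKD : K ⊆ ball (0:ℂ) 1)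
    (r : ℝ) (hr : IsGreatest ((fun w : ℂ => ‖w‖) '' K) r) :
    ∀ z ∈ K,
      ‖(lam - z) / (1 - (starRingEnd ℂ) lam * z) - lam / (‖lam‖ : ℂ)‖
        ≤ 2 * (1 - ‖lam‖) / (1 - r) :=
  mobius_close_to_unimodular_constant_general lam hlam hne K hKD r hr
end

section
/- Let {z_n} be a sequence in the open unit disk with lim |z_n| = 1. Then there exists a subsequence {w_n} such that for all k, the product over j < k of d(w_j, w_k) exceeds 1 - 1/(k+1)², where d is the pseudohyperbolic distance. Consequently, lim_{k→∞} ∏_{j ≠ k} d(w_j, w_k) = 1, i.e. {w_n} is a thin Blaschke sequence. -/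
/-!
From `1 - pd z w ^ 2 = (1 - ‖z‖²)(1 - ‖w‖²) / ‖1 - w̄ z‖²` one gets `pd a (z n) → 1` for every
fixed `a` in the disk, so the subsequence `w k = z (φ k)` can be chosen inductively with
`pd (w j) (w k) > 1 - 1/(k+1)³` for all `j < k`. By `1 - ∑ aᵢ ≤ ∏ (1 - aᵢ)`, the product over
`j < k` then exceeds `1 - k/(k+1)³ > 1 - 1/(k+1)²`. In the full product the `j`-th factor is at
least `1 - 1/(max j k + 1)³`; these defects are dominated by the summable `1/(j+1)³` and tend to
`0` as `k → ∞`, so a Tannery-type argument gives the limit `1`.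
-/

open Metric Filter Topology

/-- The pseudohyperbolic distance on the unit disk. -/
noncomputable def pd (z w : ℂ) : ℝ := ‖(z - w) / (1 - (starRingEnd ℂ) w * z)‖

open ComplexConjugate Finset

lemma pd_symm (z w : ℂ) : pd z w = pd w z := by
  rw [pd, pd, norm_div, norm_div, norm_sub_rev z w, ← Complex.norm_conj (1 - conj z * w)]
  simp [mul_comm]

lemma norm_one_sub_conj_mul_sq_sub_norm_sub_sq (z w : ℂ) :
    ‖1 - conj w * z‖ ^ 2 - ‖z - w‖ ^ 2 = (1 - ‖z‖ ^ 2) * (1 - ‖w‖ ^ 2) := by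
  simp only [Complex.sq_norm, Complex.normSq_apply, Complex.sub_re, Complex.sub_im,
    Complex.mul_re, Complex.mul_im, Complex.conj_re, Complex.conj_im, Complex.one_re,
    Complex.one_im]
  ring

lemma one_sub_norm_le_norm_one_sub_conj_mul (z : ℂ) {w : ℂ} (hw : ‖w‖ ≤ 1) :
    1 - ‖z‖ ≤ ‖1 - conj w * z‖ := by
  have : ‖conj w * z‖ ≤ ‖z‖ := by
    rw [norm_mul, Complex.norm_conj]
    exact mul_le_of_le_one_left (norm_nonneg z) hw
  linarith [norm_sub_norm_le (1 : ℂ) (conj w * z), norm_one (α := ℂ)]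

lemma one_sub_pd_sq {z w : ℂ} (hz : ‖z‖ < 1) (hw : ‖w‖ ≤ 1) :
    1 - pd z w ^ 2 = (1 - ‖z‖ ^ 2) * (1 - ‖w‖ ^ 2) / ‖1 - conj w * z‖ ^ 2 := by
  have hD : 0 < ‖1 - conj w * z‖ := by
    linarith [one_sub_norm_le_norm_one_sub_conj_mul z hw]
  rw [pd, norm_div, div_pow, ← norm_one_sub_conj_mul_sq_sub_norm_sub_sq, sub_div,
    div_self (pow_pos hD 2).ne']

lemma one_sub_norm_sq_mul_one_sub_norm_sq_nonneg {z w : ℂ} (hz : ‖z‖ ≤ 1) (hw : ‖w‖ ≤ 1) :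
    0 ≤ (1 - ‖z‖ ^ 2) * (1 - ‖w‖ ^ 2) :=
  mul_nonneg (sub_nonneg.2 (pow_le_one₀ (norm_nonneg z) hz))
    (sub_nonneg.2 (pow_le_one₀ (norm_nonneg w) hw))

lemma pd_le_one {z w : ℂ} (hz : ‖z‖ < 1) (hw : ‖w‖ ≤ 1) : pd z w ≤ 1 := by
  have h := one_sub_pd_sq hz hw
  have := div_nonneg (one_sub_norm_sq_mul_one_sub_norm_sq_nonneg hz.le hw)
    (sq_nonneg ‖1 - conj w * z‖)
  nlinarith [show 0 ≤ pd z w from norm_nonneg _]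

lemma one_sub_pd_le {z w : ℂ} (hz : ‖z‖ < 1) (hw : ‖w‖ ≤ 1) :
    1 - pd z w ≤ (1 - ‖z‖ ^ 2) * (1 - ‖w‖ ^ 2) / (1 - ‖z‖) ^ 2 := by
  have hpd0 : 0 ≤ pd z w := norm_nonneg _
  have hpd1 := pd_le_one hz hw
  have := one_sub_norm_sq_mul_one_sub_norm_sq_nonneg hz.le hw
  calc 1 - pd z w ≤ 1 - pd z w ^ 2 := by nlinarith
    _ = (1 - ‖z‖ ^ 2) * (1 - ‖w‖ ^ 2) / ‖1 - conj w * z‖ ^ 2 := one_sub_pd_sq hz hw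
    _ ≤ (1 - ‖z‖ ^ 2) * (1 - ‖w‖ ^ 2) / (1 - ‖z‖) ^ 2 := by
      gcongr
      exact one_sub_norm_le_norm_one_sub_conj_mul z hw

lemma tendsto_pd_of_tendsto_norm_one {ι : Type*} {l : Filter ι} {a : ℂ} {w : ι → ℂ} (ha : ‖a‖ < 1)
    (hw : ∀ i, ‖w i‖ ≤ 1) (hlim : Tendsto (fun i => ‖w i‖) l (𝓝 1)) :
    Tendsto (fun i => pd a (w i)) l (𝓝 1) := by
  have hbound : Tendsto (fun i => 1 - (1 - ‖a‖ ^ 2) * (1 - ‖w i‖ ^ 2) / (1 - ‖a‖) ^ 2) l (𝓝 1) := by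
    simpa using (tendsto_const_nhds (x := (1 : ℝ))).sub
      ((((tendsto_const_nhds (x := (1 : ℝ))).sub (hlim.pow 2)).const_mul (1 - ‖a‖ ^ 2)).div_const
        ((1 - ‖a‖) ^ 2))
  exact tendsto_of_tendsto_of_tendsto_of_le_of_le hbound tendsto_const_nhds
    (fun i => by linarith [one_sub_pd_le ha (hw i)]) (fun i => pd_le_one ha (hw i))

lemma one_sub_sum_le_prod {ι : Type*} (s : Finset ι) {f g : ι → ℝ} (hf0 : ∀ i ∈ s, 0 ≤ f i)
    (hf1 : ∀ i ∈ s, f i ≤ 1) (hfg : ∀ i ∈ s, 1 - g i ≤ f i) :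
    1 - ∑ i ∈ s, g i ≤ ∏ i ∈ s, f i := by
  classical
  induction s using Finset.induction_on with
  | empty => simp
  | insert a s ha ih =>
    simp only [mem_insert, forall_eq_or_imp] at hf0 hf1 hfg
    rw [prod_insert ha, sum_insert ha]
    have hP0 : 0 ≤ ∏ i ∈ s, f i := prod_nonneg hf0.2
    have hP1 : ∏ i ∈ s, f i ≤ 1 := prod_le_one hf0.2 hf1.2
    -- `f a * P ≥ f a + P - 1` because `(1 - f a) * (1 - P) ≥ 0`
    nlinarith [ih hf0.2 hf1.2 hfg.2, mul_nonneg (sub_nonneg.2 hf1.1) (sub_nonneg.2 hP1)]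

lemma multipliable_of_nonneg_of_le_one {ι : Type*} {f : ι → ℝ} (hf0 : ∀ i, 0 ≤ f i)
    (hf1 : ∀ i, f i ≤ 1) : Multipliable f := by
  classical
  refine ⟨_, tendsto_atTop_ciInf (fun s t hst => ?_) ⟨0, ?_⟩⟩
  · rw [← prod_sdiff hst]
    exact mul_le_of_le_one_left (prod_nonneg fun i _ => hf0 i)
      (prod_le_one (fun i _ => hf0 i) fun i _ => hf1 i)
  · rintro _ ⟨s, rfl⟩
    exact prod_nonneg fun i _ => hf0 i

lemma tendsto_tprod_of_dominated {α ι : Type*} {l : Filter α} {f g : α → ι → ℝ}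
    {bound : ι → ℝ} (hf0 : ∀ a i, 0 ≤ f a i) (hf1 : ∀ a i, f a i ≤ 1)
    (hfg : ∀ a i, 1 - g a i ≤ f a i) (hg0 : ∀ a i, 0 ≤ g a i) (hgb : ∀ a i, g a i ≤ bound i)
    (hbound : Summable bound) (hg : ∀ i, Tendsto (g · i) l (𝓝 0)) :
    Tendsto (fun a => ∏' i, f a i) l (𝓝 1) := by
  have hprod a := (multipliable_of_nonneg_of_le_one (hf0 a) (hf1 a)).hasProd
  have hsum a : Summable (g a) := hbound.of_nonneg_of_le (hg0 a) (hgb a)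
  have hlower a : 1 - ∑' i, g a i ≤ ∏' i, f a i :=
    ge_of_tendsto' (hprod a) fun s => calc
      1 - ∑' i, g a i ≤ 1 - ∑ i ∈ s, g a i := by
        gcongr; exact (hsum a).sum_le_tsum s fun i _ => hg0 a i
      _ ≤ ∏ i ∈ s, f a i :=
        one_sub_sum_le_prod s (fun i _ => hf0 a i) (fun i _ => hf1 a i) fun i _ => hfg a i
  have hupper a : ∏' i, f a i ≤ 1 :=
    le_of_tendsto' (hprod a) fun s => prod_le_one (fun i _ => hf0 a i) fun i _ => hf1 a i
  have htsum : Tendsto (fun a => ∑' i, g a i) l (𝓝 0) := by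
    simpa using tendsto_tsum_of_dominated_convergence hbound hg
      (Eventually.of_forall fun a i => by rw [Real.norm_of_nonneg (hg0 a i)]; exact hgb a i)
  exact tendsto_of_tendsto_of_tendsto_of_le_of_le (by simpa using tendsto_const_nhds.sub htsum)
    tendsto_const_nhds hlower hupper

lemma exists_strictMono_forall_lt_of_eventually {r : ℕ → ℕ → ℕ → Prop}
    (h : ∀ k m, ∀ᶠ n in atTop, r k m n) :
    ∃ φ : ℕ → ℕ, StrictMono φ ∧ ∀ k, ∀ j < k, r k (φ j) (φ k) := by
  -- Extract pairs (stage, index) such that `r` holds at every stage up to the later one; the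
  -- stages grow at least as fast as the position.
  obtain ⟨f, -, hf⟩ := exists_seq_of_forall_finset_exists (fun _ : ℕ × ℕ => True)
    (fun x y => x.1 < y.1 ∧ x.2 < y.2 ∧ ∀ i ≤ y.1, r i x.2 y.2) fun s _ => by
      obtain ⟨n, hn⟩ := ((eventually_all_finset s).2 fun x _ => (eventually_gt_atTop x.2).and
        ((eventually_all_finset (Iic (s.sup Prod.fst + 1))).2 fun i _ => h i x.2)).exists
      exact ⟨(s.sup Prod.fst + 1, n), trivial, fun x hx =>
        ⟨Nat.lt_succ_of_le (le_sup hx), (hn x hx).1, fun i hi => (hn x hx).2 i (mem_Iic.2 hi)⟩⟩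
  have hstage : StrictMono fun k => (f k).1 := fun m n hmn => (hf m n hmn).1
  exact ⟨fun k => (f k).2, fun m n hmn => (hf m n hmn).2.1,
    fun k j hjk => (hf j k hjk).2.2 k (hstage.id_le k)⟩

lemma one_sub_mul_le_prod_pd {w : ℕ → ℂ} (hw : ∀ n, ‖w n‖ < 1) {δ : ℝ} (k : ℕ)
    (hsep : ∀ j < k, 1 - δ ≤ pd (w j) (w k)) :
    1 - k * δ ≤ ∏ j ∈ range k, pd (w j) (w k) := by
  have := one_sub_sum_le_prod (range k) (g := fun _ => δ) (fun j _ => norm_nonneg _)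
    (fun j _ => pd_le_one (hw j) (hw k).le) fun j hj => hsep j (mem_range.1 hj)
  rwa [sum_const, card_range, nsmul_eq_mul] at this

lemma tendsto_tprod_pd_of_separated {w : ℕ → ℂ} (hw : ∀ n, ‖w n‖ < 1) {ε : ℕ → ℝ}
    (hεanti : Antitone ε) (hεsum : Summable ε) (hsep : ∀ k, ∀ j < k, 1 - ε k ≤ pd (w j) (w k)) :
    Tendsto (fun k => ∏' j, if j = k then 1 else pd (w j) (w k)) atTop (𝓝 1) := by
  have hε0 := hεanti.le_of_tendsto hεsum.tendsto_atTop_zero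
  refine tendsto_tprod_of_dominated (g := fun k j => ε (max j k)) (bound := ε)
    (fun k j => ?_) (fun k j => ?_) (fun k j => ?_) (fun k j => hε0 _)
    (fun k j => hεanti (le_max_left j k)) hεsum fun j => ?_
  · split_ifs
    exacts [zero_le_one, norm_nonneg _]
  · split_ifs
    exacts [le_rfl, pd_le_one (hw _) (hw _).le]
  · split_ifs with hjk
    · linarith [hε0 (max j k)]
    rcases Ne.lt_or_gt hjk with hjk | hkj
    · simpa [max_eq_right hjk.le] using hsep k j hjk
    · simpa [max_eq_left hkj.le, pd_symm] using hsep j k hkj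
  · exact hεsum.tendsto_atTop_zero.congr'
      ((eventually_ge_atTop j).mono fun k hk => by simp only [max_eq_right hk])

lemma summable_one_div_nat_add_one_pow_three : Summable fun k : ℕ => 1 / ((k : ℝ) + 1) ^ 3 := by
  simpa using (summable_nat_add_iff 1).2 ((Real.summable_one_div_nat_pow (p := 3)).2 (by norm_num))

lemma nat_mul_one_div_add_one_pow_three_lt (k : ℕ) :
    k * (1 / ((k : ℝ) + 1) ^ 3) < 1 / ((k : ℝ) + 1) ^ 2 := by
  rw [mul_one_div, div_lt_div_iff₀ (by positivity) (by positivity)]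
  nlinarith [show (0 : ℝ) < ((k : ℝ) + 1) ^ 2 by positivity]

theorem exists_thin_subsequence
    (z : ℕ → ℂ) (hz : ∀ n, z n ∈ ball (0:ℂ) 1)
    (hlim : Tendsto (fun n => ‖z n‖) atTop (𝓝 1)) :
    ∃ φ : ℕ → ℕ, StrictMono φ ∧
      (∀ k : ℕ, 1 - 1/((k:ℝ)+1)^2 < ∏ j ∈ Finset.range k, pd (z (φ j)) (z (φ k))) ∧
      Tendsto (fun k => ∏' j : ℕ, if j = k then 1 else pd (z (φ j)) (z (φ k)))
        atTop (𝓝 1) := by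
  have hz1 n : ‖z n‖ < 1 := mem_ball_zero_iff.1 (hz n)
  obtain ⟨φ, hφ, hsep⟩ := exists_strictMono_forall_lt_of_eventually
    (r := fun k m n => 1 - 1 / ((k : ℝ) + 1) ^ 3 < pd (z m) (z n)) fun k m =>
      (tendsto_pd_of_tendsto_norm_one (hz1 m) (fun n => (hz1 n).le) hlim).eventually_const_lt
        (by linarith [show 0 < 1 / ((k : ℝ) + 1) ^ 3 by positivity])
  refine ⟨φ, hφ, fun k => ?_, ?_⟩
  · calc 1 - 1 / ((k : ℝ) + 1) ^ 2 < 1 - k * (1 / ((k : ℝ) + 1) ^ 3) := by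
          linarith [nat_mul_one_div_add_one_pow_three_lt k]
      _ ≤ _ := one_sub_mul_le_prod_pd (fun n => hz1 _) k fun j hj => (hsep k j hj).le
  · exact tendsto_tprod_pd_of_separated (fun n => hz1 _)
      (fun m n hmn => by gcongr) summable_one_div_nat_add_one_pow_three
      fun k j hj => (hsep k j hj).le
end

section
/- Let B be a finite Blaschke product of degree n ≥ 2. Then B', restricted to the open unit disk D, has exactly n - 1 zeros counting multiplicity (Bochner's theorem on Blaschke critical points, disk part). -/
/-!
Write `B = c P / Q` with `P = ∏ (a_k - z)` and `Q = ∏ (1 - conj a_k z)`. Then `B' = c W / Q²` for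
the Wronskian `W = Q P' - Q' P`, a polynomial of degree at most `2n - 2`, and `Q` has no zeros in
the disk. On the unit circle `W z = (-z)^(n-1) ∑_k (|a_k|² - 1) ∏_{j ≠ k} |a_j - z|²` is a nonzero
real multiple of `z^(n-1)`, so `W` has no zeros there and is self-inversive:
`W z = z^(2n-2) conj (W (1 / conj z))`. Its nonzero roots are therefore permuted by
`r ↦ 1 / conj r`, which exchanges the inside and the outside of the disk, while the
`2n - 2 - deg W` remaining roots sit at `0`. Counting gives exactly `n - 1` roots in the disk.
-/

open Metric Polynomial ComplexConjugate

namespace Polynomial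

theorem natDegree_wronskian_le {R : Type*} [CommRing R] {a b : R[X]} {n : ℕ}
    (ha : a.natDegree ≤ n) (hb : b.natDegree ≤ n) : (wronskian a b).natDegree ≤ 2 * n - 2 := by
  rcases n with _ | m
  · rw [eq_C_of_natDegree_le_zero ha, eq_C_of_natDegree_le_zero hb]
    simp [wronskian]
  have ha' : (derivative a).natDegree ≤ m := (natDegree_derivative_le a).trans (by omega)
  have hb' : (derivative b).natDegree ≤ m := (natDegree_derivative_le b).trans (by omega)
  rw [natDegree_le_iff_coeff_eq_zero]
  intro k hk
  rcases (show k = (m + 1) + m ∨ (m + 1) + m < k by omega) with rfl | hk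
  -- the top coefficients of `a * b'` and `a' * b` are both `(m + 1) a_{m+1} b_{m+1}`
  · rw [wronskian, coeff_sub, coeff_mul_add_eq_of_natDegree_le ha hb', Nat.add_comm (m + 1) m,
      coeff_mul_add_eq_of_natDegree_le ha' hb, coeff_derivative, coeff_derivative]
    ring
  · rw [wronskian, coeff_sub,
      coeff_eq_zero_of_natDegree_lt ((natDegree_mul_le).trans_lt (by omega)),
      coeff_eq_zero_of_natDegree_lt ((natDegree_mul_le).trans_lt (by omega)), sub_zero]

theorem wronskian_prod {R ι : Type*} [CommRing R] [DecidableEq ι] (s : Finset ι) (f g : ι → R[X]) :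
    wronskian (∏ i ∈ s, f i) (∏ i ∈ s, g i) =
      ∑ i ∈ s, (∏ j ∈ s.erase i, f j * g j) * wronskian (f i) (g i) := by
  simp only [wronskian, derivative_prod_finset, Finset.mul_sum, Finset.sum_mul,
    ← Finset.sum_sub_distrib]
  refine Finset.sum_congr rfl fun i hi => ?_
  rw [← Finset.mul_prod_erase s f hi, ← Finset.mul_prod_erase s g hi, Finset.prod_mul_distrib]
  ring

theorem hasDerivAt_eval_div_eval {𝕜 : Type*} [NontriviallyNormedField 𝕜] (p q : 𝕜[X]) {z : 𝕜}
    (hq : q.eval z ≠ 0) :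
    HasDerivAt (fun w => p.eval w / q.eval w) ((wronskian q p).eval z / q.eval z ^ 2) z := by
  refine ((p.hasDerivAt z).div (q.hasDerivAt z) hq).congr_deriv ?_
  simp only [wronskian, eval_sub, eval_mul]
  ring

theorem reflect_prod_X_sub_C {R : Type*} [CommRing R] [Nontrivial R] (t : Multiset R) :
    reflect (Multiset.card t) (t.map fun r => X - C r).prod =
      (t.map fun r => 1 - C r * X).prod := by
  induction t using Multiset.induction_on with
  | empty => simp
  | cons r t ih =>
    rw [Multiset.map_cons, Multiset.prod_cons, Multiset.card_cons, add_comm,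
      reflect_mul _ _ (natDegree_X_sub_C_le r) (natDegree_multiset_prod_X_sub_C_eq_card t).le, ih,
      Multiset.map_cons, Multiset.prod_cons, reflect_sub, reflect_C, ← pow_one X, reflect_monomial]
    simp

theorem roots_prod_one_sub_C_mul_X {K : Type*} [Field K] [DecidableEq K] (t : Multiset K) :
    (t.map fun r => 1 - C r * X).prod.roots = (t.filter (· ≠ 0)).map (·⁻¹) := by
  have hne : ∀ s : K, 1 - C s * X ≠ 0 := fun s h => by simpa using congrArg (eval 0) h
  induction t using Multiset.induction_on with
  | empty => simp
  | cons r t ih =>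
    rw [Multiset.map_cons, Multiset.prod_cons, roots_mul, ih]
    · by_cases hr : r = 0
      · simp [hr]
      · have : 1 - C r * X = C (-r) * (X - C r⁻¹) := by
          rw [mul_sub, ← C_mul, neg_mul, mul_inv_cancel₀ hr, C_neg, C_neg, C_1]; ring
        rw [this, roots_C_mul _ (neg_ne_zero.mpr hr), roots_X_sub_C]
        simp [hr]
    · exact mul_ne_zero (hne r) (Multiset.prod_ne_zero fun h => by
        obtain ⟨s, -, hs⟩ := Multiset.mem_map.mp h; exact hne s hs)

theorem roots_reflect {K : Type*} [Field K] [IsAlgClosed K] [DecidableEq K] {p : K[X]} {N : ℕ}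
    (hp : p ≠ 0) (hN : p.natDegree ≤ N) :
    (reflect N p).roots =
      Multiset.replicate (N - p.natDegree) 0 + (p.roots.filter (· ≠ 0)).map (·⁻¹) := by
  have hcard : Multiset.card p.roots = p.natDegree := IsAlgClosed.card_roots_eq_natDegree
  obtain ⟨j, rfl⟩ : ∃ j, N = j + p.natDegree := ⟨N - p.natDegree, by omega⟩
  rw [← hcard]
  conv_lhs => arg 1; arg 2; rw [← C_leadingCoeff_mul_prod_multiset_X_sub_C hcard]
  rw [reflect_C_mul, ← one_mul (Multiset.prod _),
    reflect_mul _ _ (natDegree_one.trans_le j.zero_le)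
      (natDegree_multiset_prod_X_sub_C_eq_card _).le,
    reflect_one, reflect_prod_X_sub_C, Nat.add_sub_cancel,
    roots_C_mul _ (leadingCoeff_ne_zero.mpr hp), roots_mul, roots_X_pow,
    roots_prod_one_sub_C_mul_X, Multiset.nsmul_singleton]
  refine mul_ne_zero (pow_ne_zero _ X_ne_zero) ?_
  rw [← reflect_prod_X_sub_C, Ne, reflect_eq_zero_iff]
  exact (monic_multiset_prod_of_monic _ _ fun r _ => monic_X_sub_C r).ne_zero

theorem exists_eq_prod_multiset_filter_roots_mul {K : Type*} [Field K] [IsAlgClosed K] {p : K[X]}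
    (hp : p ≠ 0) (S : Set K) [DecidablePred (· ∈ S)] :
    ∃ h : K[X], p = ((p.roots.filter (· ∈ S)).map fun r => X - C r).prod * h ∧
      ∀ z ∈ S, h.eval z ≠ 0 := by
  classical
  obtain ⟨h, hph⟩ := (Multiset.prod_dvd_prod_of_le (Multiset.map_le_map
    (Multiset.filter_le (· ∈ S) p.roots))).trans (prod_multiset_X_sub_C_dvd p)
  refine ⟨h, hph, fun z hz hhz => ?_⟩
  have hh : h ≠ 0 := by rintro rfl; exact hp (by simpa using hph)
  have hroots : p.roots = p.roots.filter (· ∈ S) + h.roots := by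
    conv_lhs => rw [hph]
    rw [roots_mul (hph ▸ hp), roots_multiset_prod_X_sub_C]
  have hcount := congrArg (Multiset.count z) hroots
  rw [Multiset.count_add, Multiset.count_filter_of_pos hz] at hcount
  have : 0 < h.roots.count z := Multiset.count_pos.mpr ((mem_roots hh).mpr hhz)
  omega

end Polynomial

theorem Multiset.exists_fin_map_eq {α : Type*} {s : Multiset α} {N : ℕ} (hs : Multiset.card s = N) :
    ∃ w : Fin N → α, Finset.univ.val.map w = s := by
  subst hs
  refine ⟨fun i => s.toList.get (i.cast (Multiset.length_toList s).symm), ?_⟩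
  rw [Fin.univ_val_map]
  conv_rhs => rw [← Multiset.coe_toList s]
  exact congrArg _ (List.ext_get (by simp) fun i _ _ => by simp)

theorem reflect_map_conj_eq_self_of_forall_sphere {p : ℂ[X]} {N : ℕ} (hdeg : p.natDegree ≤ 2 * N)
    (h : ∀ z ∈ sphere (0 : ℂ) 1, ∃ s : ℝ, p.eval z = z ^ N * s) :
    reflect (2 * N) (p.map (starRingEnd ℂ)) = p := by
  have hinf : (sphere (0 : ℂ) 1).Infinite :=
    (isConnected_sphere (by rw [Complex.rank_real_complex]; norm_num) 0 zero_le_one).isPreconnected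
      |>.infinite_of_nontrivial ⟨1, by simp, -1, by simp, by norm_num⟩
  refine eq_of_infinite_eval_eq _ _ (hinf.mono fun z hz => ?_)
  obtain ⟨s, hs⟩ := h z hz
  have hz1 : conj z * z = 1 := by
    rw [mul_comm, Complex.mul_conj, Complex.normSq_eq_norm_sq, mem_sphere_zero_iff_norm.mp hz]
    norm_num
  let _ : Invertible (conj z) := ⟨z, mul_comm z (conj z) ▸ hz1, hz1⟩
  have hrefl := eval₂_reflect_mul_pow (RingHom.id ℂ) (conj z) (2 * N) (p.map (starRingEnd ℂ))
    ((natDegree_map _).trans_le hdeg)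
  rw [eval₂_id, eval₂_id, eval_map, eval₂_at_apply, hs, map_mul, map_pow,
    Complex.conj_ofReal] at hrefl
  change eval z _ * _ = _ at hrefl
  show eval z _ = eval z p
  calc eval z (reflect (2 * N) (p.map (starRingEnd ℂ)))
      = eval z (reflect (2 * N) (p.map (starRingEnd ℂ))) * (conj z * z) ^ (2 * N) := by
        rw [hz1, one_pow, mul_one]
    _ = conj z ^ N * s * z ^ (2 * N) := by rw [← hrefl]; ring
    _ = z ^ N * s * (conj z * z) ^ N := by ring
    _ = eval z p := by rw [hz1, one_pow, mul_one, hs]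

open scoped Classical in
theorem card_roots_filter_mem_ball_of_reflect_map_conj_eq_self {p : ℂ[X]} {N : ℕ} (hp : p ≠ 0)
    (hdeg : p.natDegree ≤ 2 * N) (hself : reflect (2 * N) (p.map (starRingEnd ℂ)) = p)
    (hsphere : ∀ z ∈ sphere (0 : ℂ) 1, p.eval z ≠ 0) :
    Multiset.card (p.roots.filter (· ∈ ball (0 : ℂ) 1)) = N := by
  have hroots : p.roots = Multiset.replicate (2 * N - p.natDegree) 0 +
      (p.roots.filter (· ≠ 0)).map fun r => (conj r)⁻¹ := by
    conv_lhs => rw [← hself]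
    rw [roots_reflect (Polynomial.map_ne_zero hp)
        ((natDegree_map _).trans_le hdeg), natDegree_map,
      ← roots_map_of_injective_of_card_eq_natDegree (RingHom.injective _)
        IsAlgClosed.card_roots_eq_natDegree, Multiset.filter_map, Multiset.map_map]
    simp
  have hout : ∀ r ∈ p.roots, ((conj r)⁻¹ ∈ ball (0 : ℂ) 1 ∧ r ≠ 0) ↔ r ∉ ball (0 : ℂ) 1 := by
    intro r hr
    have h1 : ‖r‖ ≠ 1 := fun h =>
      hsphere r (mem_sphere_zero_iff_norm.mpr h) (isRoot_of_mem_roots hr)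
    simp only [mem_ball_zero_iff, norm_inv, Complex.norm_conj, not_lt, inv_lt_one_iff₀,
      norm_le_zero_iff]
    constructor
    · rintro ⟨h | h, h0⟩
      exacts [absurd h h0, h.le]
    · intro h
      exact ⟨Or.inr (h.lt_of_ne' h1), by rintro rfl; norm_num at h⟩
  have hin : Multiset.card (p.roots.filter (· ∈ ball (0 : ℂ) 1)) =
      (2 * N - p.natDegree) + Multiset.card (p.roots.filter (· ∉ ball (0 : ℂ) 1)) := by
    conv_lhs => rw [hroots]
    rw [Multiset.filter_add, Multiset.card_add, Multiset.filter_eq_self.mpr,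
      Multiset.card_replicate, Multiset.filter_map, Multiset.card_map, Multiset.filter_filter]
    · congr 2
      exact Multiset.filter_congr hout
    · intro r hr
      simp [Multiset.eq_of_mem_replicate hr]
  have hsum := Multiset.card_add (p.roots.filter (· ∈ ball (0 : ℂ) 1))
    (p.roots.filter (· ∉ ball (0 : ℂ) 1))
  rw [Multiset.filter_add_not, IsAlgClosed.card_roots_eq_natDegree] at hsum
  omega

namespace Blaschke

variable {ι : Type*} [Fintype ι]

noncomputable def num (a : ι → ℂ) : ℂ[X] := ∏ k, (C (a k) - X)

noncomputable def den (a : ι → ℂ) : ℂ[X] := ∏ k, (1 - C (conj (a k)) * X)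

theorem natDegree_num_le (a : ι → ℂ) : (num a).natDegree ≤ Fintype.card ι :=
  (natDegree_prod_le _ _).trans <| (Finset.sum_le_card_nsmul _ _ 1 fun k _ => by
    compute_degree).trans (by simp)

theorem natDegree_den_le (a : ι → ℂ) : (den a).natDegree ≤ Fintype.card ι :=
  (natDegree_prod_le _ _).trans <| (Finset.sum_le_card_nsmul _ _ 1 fun k _ => by
    compute_degree).trans (by simp)

theorem wronskian_factor (a : ℂ) :
    wronskian (1 - C (conj a) * X) (C a - X) = C ((Complex.normSq a : ℂ) - 1) := by
  rw [← Complex.mul_conj]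
  simp only [wronskian, derivative_one, derivative_mul, derivative_C, derivative_X,
    map_sub, map_mul, map_one]
  ring

theorem factor_mul_factor_of_norm_eq_one (a : ℂ) {z : ℂ} (hz : ‖z‖ = 1) :
    (1 - conj a * z) * (a - z) = -z * Complex.normSq (a - z) := by
  have hz1 : z * conj z = 1 := by
    rw [Complex.mul_conj, Complex.normSq_eq_norm_sq, hz]; norm_num
  rw [← Complex.mul_conj, map_sub]
  linear_combination (z - a) * hz1

theorem eval_wronskian_of_norm_eq_one [DecidableEq ι] (a : ι → ℂ) {z : ℂ} (hz : ‖z‖ = 1) :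
    (wronskian (den a) (num a)).eval z = (-z) ^ (Fintype.card ι - 1) *
      ↑(∑ k, (Complex.normSq (a k) - 1) * ∏ j ∈ Finset.univ.erase k, Complex.normSq (a j - z)) := by
  rw [den, num, wronskian_prod, eval_finsetSum]
  push_cast
  rw [Finset.mul_sum]
  refine Finset.sum_congr rfl fun k _ => ?_
  simp only [eval_mul, eval_prod, wronskian_factor, eval_C, eval_sub, eval_one, eval_X]
  rw [Finset.prod_congr rfl fun j _ => factor_mul_factor_of_norm_eq_one (a j) hz,
    Finset.prod_mul_distrib, Finset.prod_const, Finset.card_erase_of_mem (Finset.mem_univ k),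
    Finset.card_univ]
  ring

theorem sum_lt_zero_of_norm_eq_one [DecidableEq ι] [Nonempty ι] {a : ι → ℂ}
    (ha : ∀ k, ‖a k‖ < 1) {z : ℂ} (hz : ‖z‖ = 1) :
    ∑ k, (Complex.normSq (a k) - 1) * ∏ j ∈ Finset.univ.erase k, Complex.normSq (a j - z) < 0 := by
  refine Finset.sum_neg (fun k _ => mul_neg_of_neg_of_pos ?_ ?_) Finset.univ_nonempty
  · rw [Complex.normSq_eq_norm_sq, sub_neg]
    nlinarith [ha k, norm_nonneg (a k)]
  · refine Finset.prod_pos fun j _ => Complex.normSq_pos.mpr (sub_ne_zero.mpr ?_)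
    rintro rfl
    exact (ha j).ne hz

theorem exists_eval_wronskian_eq_pow_mul_real [Nonempty ι] {a : ι → ℂ} (ha : ∀ k, ‖a k‖ < 1)
    {z : ℂ} (hz : z ∈ sphere (0 : ℂ) 1) :
    ∃ s : ℝ, s ≠ 0 ∧ (wronskian (den a) (num a)).eval z = z ^ (Fintype.card ι - 1) * s := by
  classical
  have hz1 := mem_sphere_zero_iff_norm.mp hz
  refine ⟨(-1) ^ (Fintype.card ι - 1) *
      ∑ k, (Complex.normSq (a k) - 1) * ∏ j ∈ Finset.univ.erase k, Complex.normSq (a j - z),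
    mul_ne_zero (pow_ne_zero _ (by norm_num)) (sum_lt_zero_of_norm_eq_one ha hz1).ne, ?_⟩
  rw [eval_wronskian_of_norm_eq_one a hz1, neg_pow]
  push_cast
  ring

theorem wronskian_ne_zero [Nonempty ι] {a : ι → ℂ} (ha : ∀ k, ‖a k‖ < 1) :
    wronskian (den a) (num a) ≠ 0 := by
  intro h
  obtain ⟨s, hs, heval⟩ := exists_eval_wronskian_eq_pow_mul_real ha (z := 1) (by simp)
  rw [h, eval_zero, one_pow, one_mul] at heval
  exact hs (Complex.ofReal_eq_zero.mp heval.symm)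

open scoped Classical in
theorem card_roots_wronskian_filter_mem_ball [Nonempty ι] {a : ι → ℂ} (ha : ∀ k, ‖a k‖ < 1) :
    Multiset.card ((wronskian (den a) (num a)).roots.filter (· ∈ ball (0 : ℂ) 1)) =
      Fintype.card ι - 1 := by
  have hdeg : (wronskian (den a) (num a)).natDegree ≤ 2 * (Fintype.card ι - 1) :=
    (natDegree_wronskian_le (natDegree_den_le a) (natDegree_num_le a)).trans (by omega)
  have hsphere := fun z (hz : z ∈ sphere (0 : ℂ) 1) => exists_eval_wronskian_eq_pow_mul_real ha hz
  have hself := reflect_map_conj_eq_self_of_forall_sphere hdeg fun z hz =>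
    (hsphere z hz).imp fun _ => And.right
  refine card_roots_filter_mem_ball_of_reflect_map_conj_eq_self (wronskian_ne_zero ha) hdeg hself
    fun z hz => ?_
  obtain ⟨s, hs, heval⟩ := hsphere z hz
  rw [heval]
  exact mul_ne_zero (pow_ne_zero _ (ne_zero_of_mem_sphere one_ne_zero ⟨z, hz⟩))
    (Complex.ofReal_ne_zero.mpr hs)

theorem eval_den_ne_zero {a : ι → ℂ} (ha : ∀ k, ‖a k‖ < 1) {z : ℂ} (hz : ‖z‖ < 1) :
    (den a).eval z ≠ 0 := by
  rw [den, eval_prod]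
  refine Finset.prod_ne_zero_iff.mpr fun k _ h => ?_
  simp only [eval_sub, eval_one, eval_mul, eval_C, eval_X, sub_eq_zero] at h
  have : ‖conj (a k) * z‖ < 1 := by
    rw [norm_mul, Complex.norm_conj]
    exact mul_lt_one_of_nonneg_of_lt_one_left (norm_nonneg _) (ha k) hz.le
  rw [← h, norm_one] at this
  exact this.false

theorem hasDerivAt (c : ℂ) {a : ι → ℂ} (ha : ∀ k, ‖a k‖ < 1) {z : ℂ} (hz : ‖z‖ < 1) :
    HasDerivAt (fun w => c * ∏ k, (a k - w) / (1 - conj (a k) * w))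
      (c * (wronskian (den a) (num a)).eval z / (den a).eval z ^ 2) z := by
  have hquot : (fun w => c * ∏ k, (a k - w) / (1 - conj (a k) * w)) =
      fun w => c * ((num a).eval w / (den a).eval w) := by
    funext w
    simp [num, den, eval_prod, Finset.prod_div_distrib]
  rw [hquot, mul_div_assoc]
  exact (hasDerivAt_eval_div_eval _ _ (eval_den_ne_zero ha hz)).const_mul c

end Blaschke

theorem bochner_disk_part
    (n : ℕ) (hn : 2 ≤ n) (c : ℂ) (hc : ‖c‖ = 1)
    (a : Fin n → ℂ) (ha : ∀ k, a k ∈ ball (0:ℂ) 1) (B : ℂ → ℂ)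
    (hB : ∀ z ∈ ball (0:ℂ) 1,
      B z = c * ∏ k, (a k - z) / (1 - (starRingEnd ℂ) (a k) * z)) :
    ∃ (w : Fin (n-1) → ℂ) (g : ℂ → ℂ),
      (∀ i, w i ∈ ball (0:ℂ) 1) ∧
      DifferentiableOn ℂ g (ball (0:ℂ) 1) ∧
      (∀ z ∈ ball (0:ℂ) 1, g z ≠ 0) ∧
      (∀ z ∈ ball (0:ℂ) 1, deriv B z = (∏ i, (z - w i)) * g z) := by
  classical
  have : Nonempty (Fin n) := ⟨⟨0, by omega⟩⟩
  have ha' : ∀ k, ‖a k‖ < 1 := fun k => mem_ball_zero_iff.mp (ha k)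
  have hden : ∀ z ∈ ball (0 : ℂ) 1, (Blaschke.den a).eval z ≠ 0 :=
    fun z hz => Blaschke.eval_den_ne_zero ha' (mem_ball_zero_iff.mp hz)
  obtain ⟨h, hWh, hh⟩ :=
    exists_eq_prod_multiset_filter_roots_mul (Blaschke.wronskian_ne_zero ha') (ball (0 : ℂ) 1)
  obtain ⟨w, hw⟩ := Multiset.exists_fin_map_eq
    ((Blaschke.card_roots_wronskian_filter_mem_ball ha').trans (by rw [Fintype.card_fin]))
  refine ⟨w, fun z => c * h.eval z / (Blaschke.den a).eval z ^ 2, fun i => ?_, ?_,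
    fun z hz => ?_, fun z hz => ?_⟩
  · have := hw ▸ Multiset.mem_map_of_mem w (Finset.mem_univ_val i)
    exact (Multiset.mem_filter.mp this).2
  · exact (h.differentiable.const_mul c).differentiableOn.div
      ((Blaschke.den a).differentiable.pow 2).differentiableOn fun z hz => pow_ne_zero 2 (hden z hz)
  · have hc0 : c ≠ 0 := norm_ne_zero_iff.mp (hc ▸ one_ne_zero)
    exact div_ne_zero (mul_ne_zero hc0 (hh z hz)) (pow_ne_zero 2 (hden z hz))
  · have hBeq : B =ᶠ[nhds z] _ := Filter.eventuallyEq_of_mem (isOpen_ball.mem_nhds hz) hB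
    rw [((Blaschke.hasDerivAt c ha' (mem_ball_zero_iff.mp hz)).congr_of_eventuallyEq
      hBeq).deriv, hWh, eval_mul, eval_multiset_prod, ← hw, Multiset.map_map, Multiset.map_map,
      Finset.prod_eq_multiset_prod]
    simp only [Function.comp_def, eval_sub, eval_X, eval_C]
    ring
end
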